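/- For all nonnegative integers n, HB_n^{(ν,k)}(x) = \sum_{m=0}^{n} \frac{1}{(m+1)^k} \sum_{j=0}^{m} \binom{m}{j} (-1)^j H_n^{(ν)}(x-j), where H_n^{(ν)} denotes the Hermite polynomials of order ν. -/

import Mathlib

open PowerSeries Finset

/-- The power series e^{-t}. -/
noncomputable def expNeg : PowerSeries ℝ := rescale (-1) (PowerSeries.exp ℝ)

/-- Li_k(1-e^{-t})/(1-e^{-t}) = ∑_{m≥0} (1-e^{-t})^m/(m+1)^k as a formal power series. -/
noncomputable def pbGF (k : ℤ) : PowerSeries ℝ :=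
  PowerSeries.mk fun n => ∑ m ∈ Finset.range (n + 1),
    (1 / ((m : ℝ) + 1) ^ k) * PowerSeries.coeff n ((1 - expNeg) ^ m)

/-- The power series e^{-ν t²/2}. -/
noncomputable def hermGF (ν : ℝ) : PowerSeries ℝ :=
  PowerSeries.mk fun n =>
    if Even n then (-ν / 2) ^ (n / 2) / (Nat.factorial (n / 2)) else 0

/-- Hermite and poly-Bernoulli mixed-type polynomials. -/
noncomputable def HB (ν : ℝ) (k : ℤ) (n : ℕ) (x : ℝ) : ℝ :=
  (Nat.factorial n) *
    PowerSeries.coeff n (hermGF ν * pbGF k * rescale x (PowerSeries.exp ℝ))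

/-- Poly-Bernoulli polynomials. -/
noncomputable def pB (k : ℤ) (n : ℕ) (x : ℝ) : ℝ :=
  (Nat.factorial n) * PowerSeries.coeff n (pbGF k * rescale x (PowerSeries.exp ℝ))

/-- Hermite polynomials of order ν. -/
noncomputable def Herm (ν : ℝ) (n : ℕ) (x : ℝ) : ℝ :=
  (Nat.factorial n) * PowerSeries.coeff n (hermGF ν * rescale x (PowerSeries.exp ℝ))

/-- Stirling numbers of the second kind. -/
def S2 : ℕ → ℕ → ℕ
  | 0, 0 => 1
  | 0, _ + 1 => 0
  | _ + 1, 0 => 0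
  | n + 1, m + 1 => (m + 1) * S2 n (m + 1) + S2 n m

/-!
Since 1 - e^{-t} has no constant term, (1 - e^{-t})^m only contributes to coefficients of
degree ≥ m, so up to degree n the series Li_k(1-e^{-t})/(1-e^{-t}) is the finite sum
∑_{m ≤ n} (1-e^{-t})^m/(m+1)^k. Expanding (1 - e^{-t})^m binomially and using
e^{-jt} e^{xt} = e^{(x-j)t} turns each summand, multiplied by e^{-νt²/2} e^{xt}, into a
combination of generating functions of Hermite polynomials at x - j.
-/

namespace PowerSeries

variable {R : Type*}

theorem coeff_pow_eq_zero_of_lt [CommSemiring R] {f : R⟦X⟧} (hf : constantCoeff f = 0)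
    {m p : ℕ} (hp : p < m) : coeff p (f ^ m) = 0 :=
  X_pow_dvd_iff.mp (pow_dvd_pow_of_dvd (X_dvd_iff.mpr hf) m) p hp

theorem coeff_mul_eq_of_coeff_eq [Semiring R] {f g : R⟦X⟧} {n : ℕ}
    (h : ∀ p ≤ n, coeff p f = coeff p g) (φ : R⟦X⟧) :
    coeff n (f * φ) = coeff n (g * φ) := by
  simp only [coeff_mul]
  exact sum_congr rfl fun ij hij => by rw [h _ (Finset.HasAntidiagonal.antidiagonal.fst_le hij)]

end PowerSeries

theorem constantCoeff_one_sub_expNeg : constantCoeff (1 - expNeg) = 0 := by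
  rw [← coeff_zero_eq_constantCoeff_apply, map_sub, expNeg, coeff_rescale, coeff_exp]
  simp

theorem expNeg_pow_mul_rescale_exp (x : ℝ) (j : ℕ) :
    expNeg ^ j * rescale x (exp ℝ) = rescale (x - j) (exp ℝ) := by
  rw [expNeg, ← map_pow, exp_pow_eq_rescale_exp, rescale_rescale, exp_mul_exp_eq_exp_add]
  ring_nf

theorem one_sub_expNeg_pow_mul_rescale_exp (x : ℝ) (m : ℕ) :
    (1 - expNeg) ^ m * rescale x (exp ℝ) =
      ∑ j ∈ range (m + 1), ((m.choose j : ℝ) * (-1) ^ j) • rescale (x - j) (exp ℝ) := by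
  rw [← neg_add_eq_sub, add_pow, sum_mul]
  refine sum_congr rfl fun j _ => ?_
  rw [← expNeg_pow_mul_rescale_exp, neg_pow, Algebra.smul_def]
  simp only [map_mul, map_pow, map_neg, map_one, map_natCast, one_pow, mul_one]
  ring

theorem coeff_pbGF_of_le (k : ℤ) {n p : ℕ} (hp : p ≤ n) :
    coeff p (pbGF k) =
      coeff p (∑ m ∈ range (n + 1), (1 / ((m : ℝ) + 1) ^ k) • (1 - expNeg) ^ m) := by
  simp only [pbGF, coeff_mk, map_sum, coeff_smul, smul_eq_mul]
  refine sum_subset (range_subset_range.mpr (by omega)) fun m _ hm => ?_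
  rw [coeff_pow_eq_zero_of_lt constantCoeff_one_sub_expNeg (by simpa using hm), mul_zero]

theorem HB_eq_sum_hermite (ν : ℝ) (k : ℤ) (n : ℕ) (x : ℝ) :
    HB ν k n x = ∑ m ∈ Finset.range (n + 1),
      (1 / ((m : ℝ) + 1) ^ k) * ∑ j ∈ Finset.range (m + 1),
        (m.choose j : ℝ) * (-1) ^ j * Herm ν n (x - j) := by
  have hterm : ∀ m : ℕ, (1 - expNeg) ^ m * (hermGF ν * rescale x (exp ℝ)) =
      ∑ j ∈ range (m + 1),
        ((m.choose j : ℝ) * (-1) ^ j) • (hermGF ν * rescale (x - j) (exp ℝ)) := by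
    intro m
    rw [mul_left_comm, one_sub_expNeg_pow_mul_rescale_exp, mul_sum]
    simp only [mul_smul_comm]
  rw [HB, mul_comm (hermGF ν), mul_assoc,
    coeff_mul_eq_of_coeff_eq (fun p hp => coeff_pbGF_of_le k hp), sum_mul]
  simp only [smul_mul_assoc, hterm, map_sum, coeff_smul, smul_eq_mul, mul_sum, Herm]
  refine sum_congr rfl fun m _ => sum_congr rfl fun j _ => ?_
  ring
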